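/- For any n-qubit unitaries U and V, |P_{U†} ∩ P_V| ≤ s(UV), where P_W := (W P_n W†) ∩ P_n. -/

import Mathlib

open Matrix Complex
open scoped Matrix ComplexConjugate Pointwise

noncomputable section

/-- `n`-qubit operators: matrices indexed by computational basis strings. -/
abbrev QOp (n : ℕ) := Matrix (Fin n → Fin 2) (Fin n → Fin 2) ℂ

/-- `n`-qubit state vectors. -/
abbrev QVec (n : ℕ) := (Fin n → Fin 2) → ℂ

/-- Labels of the quotient Pauli group: one pair of bits `(a,b)` (meaning `X^a Z^b`
up to phase, i.e. `I, X, Y, Z`) per qubit.  This is the standard symplectic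
encoding of the strings `{0,1,2,3}^n`, with the additive (Klein) group structure
being exactly multiplication in the Pauli group modulo phases. -/
abbrev PauliLabel (n : ℕ) := Fin n → ZMod 2 × ZMod 2

def pauliX : Matrix (Fin 2) (Fin 2) ℂ := !![0,1;1,0]
def pauliY : Matrix (Fin 2) (Fin 2) ℂ := !![0,-Complex.I;Complex.I,0]
def pauliZ : Matrix (Fin 2) (Fin 2) ℂ := !![1,0;0,-1]

/-- The single-qubit Pauli matrix with label `(a,b)`: `I, X, Y, Z`. -/
def pauli1 (ab : ZMod 2 × ZMod 2) : Matrix (Fin 2) (Fin 2) ℂ :=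
  if ab = (0,0) then 1 else if ab = (1,0) then pauliX
  else if ab = (1,1) then pauliY else pauliZ

/-- The Pauli string `σ_u = σ_{u_1} ⊗ ⋯ ⊗ σ_{u_n}`. -/
def pauliStr {n : ℕ} (u : PauliLabel n) : QOp n :=
  Matrix.of fun x y => ∏ k, pauli1 (u k) (x k) (y k)

/-- The unitary Pauli function `P_U(u|v) = tr(σ_u U σ_v U†)/2^n`. -/
def PauliFun {n : ℕ} (U : QOp n) (u v : PauliLabel n) : ℂ :=
  (pauliStr u * U * pauliStr v * Uᴴ).trace / 2 ^ n

/-- `s(U)`: the number of pairs `(u,v)` with `P_U(u|v) = ±1`. -/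
def sU {n : ℕ} (U : QOp n) : ℕ :=
  Set.ncard {p : PauliLabel n × PauliLabel n |
    PauliFun U p.1 p.2 = 1 ∨ PauliFun U p.1 p.2 = -1}

/-- The unitary stabilizer nullity `v(U) = 2n − log₂ s(U)`. -/
def nullity {n : ℕ} (U : QOp n) : ℝ := 2 * n - Real.logb 2 (sU U)

/-- The state Pauli function `P_{|ψ⟩}(u) = ⟨ψ|σ_u|ψ⟩`. -/
def statePauliFun {n : ℕ} (ψ : QVec n) (u : PauliLabel n) : ℂ :=
  star ψ ⬝ᵥ (pauliStr u).mulVec ψ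

/-- `s(|ψ⟩)`: number of labels `u` with `⟨ψ|σ_u|ψ⟩ = ±1`. -/
def sState {n : ℕ} (ψ : QVec n) : ℕ :=
  Set.ncard {u : PauliLabel n | statePauliFun ψ u = 1 ∨ statePauliFun ψ u = -1}

/-- The state stabilizer nullity `v_s(|ψ⟩) = n − log₂ s(|ψ⟩)`. -/
def stateNullity {n : ℕ} (ψ : QVec n) : ℝ := n - Real.logb 2 (sState ψ)

/-- The `n`-qubit Pauli group with phases `±1, ±i`, as a set of matrices. -/
def fullPauliGroup (n : ℕ) : Set (QOp n) :=
  {P | ∃ (c : ℂ) (u : PauliLabel n),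
    (c = 1 ∨ c = -1 ∨ c = Complex.I ∨ c = -Complex.I) ∧ P = c • pauliStr u}

/-- A Clifford unitary: a unitary with `U P̂_n U† = P̂_n`. -/
def IsClifford {n : ℕ} (U : QOp n) : Prop :=
  U ∈ Matrix.unitaryGroup (Fin n → Fin 2) ℂ ∧
    (fun P => U * P * Uᴴ) '' fullPauliGroup n = fullPauliGroup n

/-- The subgroup (as a set of labels) associated with `U`:
`P_U = (U P_n U†) ∩ P_n` modulo phases. -/
def PsubU {n : ℕ} (U : QOp n) : Set (PauliLabel n) :=
  {u | ∃ (v : PauliLabel n) (c : ℂ),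
    (c = 1 ∨ c = -1 ∨ c = Complex.I ∨ c = -Complex.I) ∧
      U * pauliStr v * Uᴴ = c • pauliStr u}

/-- Tensor product of an `n`-qubit and an `m`-qubit operator. -/
def tensorOp {n m : ℕ} (U : QOp n) (V : QOp m) : QOp (n + m) :=
  Matrix.of fun x y =>
    U (fun i => x (Fin.castAdd m i)) (fun i => y (Fin.castAdd m i)) *
    V (fun j => x (Fin.natAdd n j)) (fun j => y (Fin.natAdd n j))

/-- The first `n` symbols of a label on `n+m` qubits. -/
def fstLab {n m : ℕ} (u : PauliLabel (n + m)) : PauliLabel n :=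
  fun i => u (Fin.castAdd m i)

/-- The last `m` symbols of a label on `n+m` qubits. -/
def sndLab {n m : ℕ} (u : PauliLabel (n + m)) : PauliLabel m :=
  fun j => u (Fin.natAdd n j)

/-- The T gate acting on qubit `q` (tensored with identity elsewhere). -/
def TgateOn (n : ℕ) (q : Fin n) : QOp n :=
  Matrix.of fun x y =>
    if x = y then (if x q = 0 then 1 else Complex.exp (Complex.I * (Real.pi / 4))) else 0

/-- The single-qubit T gate `diag(1, e^{iπ/4})`. -/
def Tgate : QOp 1 := TgateOn 1 0

/-- The `n`-fold tensor power of the Hadamard gate. -/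
def HadN (n : ℕ) : QOp n :=
  Matrix.of fun x y =>
    ∏ k, ((1 / (Real.sqrt 2) : ℂ) * (if x k = 1 ∧ y k = 1 then -1 else 1))

/-- The multi-controlled Z gate `C^{n-1}Z`. -/
def CnZ (n : ℕ) : QOp n :=
  Matrix.of fun x y => if x = y then (if ∀ k, x k = 1 then -1 else 1) else 0

/-- The computational basis state `|0⟩^{⊗n}`. -/
def ket0 (n : ℕ) : QVec n := fun x => if x = fun _ => (0 : Fin 2) then 1 else 0

/-- The state `|+⟩^{⊗n}`. -/
def ketPlus (n : ℕ) : QVec n := fun _ => (1 / (Real.sqrt 2 : ℂ)) ^ n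

/-- The `2n`-qubit maximally entangled state `2^{-n/2} ∑_x |x⟩|x⟩`. -/
def maxEnt (n : ℕ) : QVec (n + n) := fun x =>
  if (fun i => x (Fin.castAdd n i)) = (fun j => x (Fin.natAdd n j))
  then (1 / (Real.sqrt 2 : ℂ)) ^ n else 0

end

/-!
If `σ_u = c U†σ_{v₁}U = d Vσ_{v₂}V†` with `c, d = ±1` (the phases `±i` are excluded because
conjugates of Pauli strings are Hermitian), then by cyclicity of the trace
`tr(σ_{v₁} UV σ_{v₂} (UV)†) = tr(U†σ_{v₁}U · Vσ_{v₂}V†) = c d 2ⁿ`, so `(v₁, v₂)` is counted by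
`s(UV)`. Since `σ_u` is determined by `v₁`, the map `u ↦ (v₁, v₂)` is injective.
-/

namespace Matrix

variable {ι R : Type*} [Fintype ι] [CommSemiring R]

def piKronecker {l m : Type*} (A : ι → Matrix l m R) : Matrix (ι → l) (ι → m) R :=
  of fun x y => ∏ k, A k (x k) (y k)

theorem piKronecker_mul_piKronecker [DecidableEq ι] {l m o : Type*} [Fintype m]
    (A : ι → Matrix l m R) (B : ι → Matrix m o R) :
    piKronecker A * piKronecker B = piKronecker fun k => A k * B k := by
  ext x y
  simp only [piKronecker, mul_apply, of_apply, Fintype.prod_sum, Finset.prod_mul_distrib]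

theorem trace_piKronecker [DecidableEq ι] {m : Type*} [Fintype m] (A : ι → Matrix m m R) :
    (piKronecker A).trace = ∏ k, (A k).trace := by
  simp only [piKronecker, trace, diag_apply, of_apply, Fintype.prod_sum]

theorem conjTranspose_piKronecker {l m : Type*} [StarRing R] (A : ι → Matrix l m R) :
    (piKronecker A)ᴴ = piKronecker fun k => (A k)ᴴ := by
  ext x y
  simp only [piKronecker, conjTranspose_apply, of_apply, star_prod]

end Matrix

open Matrix

theorem pauli1_conjTranspose (a : ZMod 2 × ZMod 2) : (pauli1 a)ᴴ = pauli1 a := by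
  obtain ⟨a₁, a₂⟩ := a
  fin_cases a₁ <;> fin_cases a₂ <;> ext i j <;> fin_cases i <;> fin_cases j <;>
    simp +decide [pauli1, pauliX, pauliY, pauliZ]

theorem trace_pauli1_mul (a b : ZMod 2 × ZMod 2) :
    (pauli1 a * pauli1 b).trace = if a = b then 2 else 0 := by
  obtain ⟨a₁, a₂⟩ := a; obtain ⟨b₁, b₂⟩ := b
  fin_cases a₁ <;> fin_cases a₂ <;> fin_cases b₁ <;> fin_cases b₂ <;>
    simp +decide [pauli1, pauliX, pauliY, pauliZ, trace_fin_two, one_add_one_eq_two]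

section Pauli

variable {n : ℕ}

theorem pauliStr_eq_piKronecker (u : PauliLabel n) :
    pauliStr u = piKronecker fun k => pauli1 (u k) := rfl

theorem pauliStr_conjTranspose (u : PauliLabel n) : (pauliStr u)ᴴ = pauliStr u := by
  simp only [pauliStr_eq_piKronecker, conjTranspose_piKronecker, pauli1_conjTranspose]

theorem trace_pauliStr_mul (u v : PauliLabel n) :
    (pauliStr u * pauliStr v).trace = if u = v then 2 ^ n else 0 := by
  simp only [pauliStr_eq_piKronecker, piKronecker_mul_piKronecker, trace_piKronecker,
    trace_pauli1_mul]
  split_ifs with huv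
  · simp [huv]
  · obtain ⟨k, hk⟩ := Function.ne_iff.mp huv
    exact Finset.prod_eq_zero (Finset.mem_univ k) (if_neg hk)

theorem pauliStr_ne_zero (u : PauliLabel n) : pauliStr u ≠ 0 := fun h => by
  simpa [h] using (trace_pauliStr_mul u u).symm

theorem eq_of_smul_pauliStr_eq {u u' : PauliLabel n} {c c' : ℂ} (hc : c ≠ 0)
    (h : c • pauliStr u = c' • pauliStr u') : u = u' := by
  by_contra huu'
  have := congrArg (fun M => (pauliStr u * M).trace) h
  simp [trace_smul, trace_pauliStr_mul, huu', hc] at this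

theorem star_eq_of_isHermitian_smul_pauliStr {u : PauliLabel n} {c : ℂ}
    (h : (c • pauliStr u).IsHermitian) : star c = c := by
  rw [IsHermitian, conjTranspose_smul, pauliStr_conjTranspose] at h
  exact smul_left_injective ℂ (pauliStr_ne_zero u) h

def IsSignedConj (W : QOp n) (v u : PauliLabel n) : Prop :=
  ∃ c : ℂ, (c = 1 ∨ c = -1) ∧ W * pauliStr v * Wᴴ = c • pauliStr u

theorem IsSignedConj.unique {W : QOp n} {v u u' : PauliLabel n}
    (h : IsSignedConj W v u) (h' : IsSignedConj W v u') : u = u' := by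
  obtain ⟨c, hc, hu⟩ := h
  obtain ⟨c', -, hu'⟩ := h'
  exact eq_of_smul_pauliStr_eq (by rcases hc with rfl | rfl <;> norm_num) (hu.symm.trans hu')

theorem exists_isSignedConj_of_mem_PsubU {W : QOp n} {u : PauliLabel n} (hu : u ∈ PsubU W) :
    ∃ v, IsSignedConj W v u := by
  obtain ⟨v, c, hc, h⟩ := hu
  have hreal : star c = c := star_eq_of_isHermitian_smul_pauliStr <| h ▸
    isHermitian_mul_mul_conjTranspose W (pauliStr_conjTranspose v)
  refine ⟨v, c, ?_, h⟩
  rcases hc with hc | hc | rfl | rfl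
  · exact Or.inl hc
  · exact Or.inr hc
  all_goals norm_num [Complex.ext_iff] at hreal

theorem pauliFun_mul_eq_mul {U V : QOp n} {u v₁ v₂ : PauliLabel n} {c d : ℂ}
    (h₁ : Uᴴ * pauliStr v₁ * U = c • pauliStr u) (h₂ : V * pauliStr v₂ * Vᴴ = d • pauliStr u) :
    PauliFun (U * V) v₁ v₂ = c * d := by
  have htrace : (pauliStr v₁ * (U * V) * pauliStr v₂ * (U * V)ᴴ).trace =
      ((Uᴴ * pauliStr v₁ * U) * (V * pauliStr v₂ * Vᴴ)).trace := by
    calc _ = (pauliStr v₁ * U * (V * pauliStr v₂ * Vᴴ) * Uᴴ).trace := by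
          simp only [conjTranspose_mul, Matrix.mul_assoc]
      _ = (Uᴴ * (pauliStr v₁ * U * (V * pauliStr v₂ * Vᴴ))).trace := trace_mul_comm _ _
      _ = _ := by simp only [Matrix.mul_assoc]
  rw [PauliFun, htrace, h₁, h₂, smul_mul_smul, trace_smul, trace_pauliStr_mul, if_pos rfl,
    smul_eq_mul, mul_div_assoc, div_self (pow_ne_zero n two_ne_zero), mul_one]

theorem pauliFun_mul_of_isSignedConj {U V : QOp n} {u v₁ v₂ : PauliLabel n}
    (h₁ : IsSignedConj Uᴴ v₁ u) (h₂ : IsSignedConj V v₂ u) :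
    PauliFun (U * V) v₁ v₂ = 1 ∨ PauliFun (U * V) v₁ v₂ = -1 := by
  obtain ⟨c, hc, hcu⟩ := h₁
  obtain ⟨d, hd, hdu⟩ := h₂
  rw [conjTranspose_conjTranspose] at hcu
  rw [pauliFun_mul_eq_mul hcu hdu]
  rcases hc with rfl | rfl <;> rcases hd with rfl | rfl <;> norm_num

end Pauli

theorem inter_le_sU_mul_general {n : ℕ} (U V : QOp n) :
    Set.ncard (PsubU Uᴴ ∩ PsubU V) ≤ sU (U * V) := by
  have hpair : ∀ u ∈ PsubU Uᴴ ∩ PsubU V, ∃ p : PauliLabel n × PauliLabel n,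
      IsSignedConj Uᴴ p.1 u ∧ IsSignedConj V p.2 u := by
    rintro u ⟨hUu, hVu⟩
    obtain ⟨v₁, h₁⟩ := exists_isSignedConj_of_mem_PsubU hUu
    obtain ⟨v₂, h₂⟩ := exists_isSignedConj_of_mem_PsubU hVu
    exact ⟨(v₁, v₂), h₁, h₂⟩
  choose! f hf using hpair
  refine Set.ncard_le_ncard_of_injOn f
    (fun u hu => pauliFun_mul_of_isSignedConj (hf u hu).1 (hf u hu).2) ?_
  intro a ha b hb hab
  exact (hf a ha).1.unique (congrArg Prod.fst hab ▸ (hf b hb).1)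

theorem inter_le_sU_mul {n : ℕ} (U V : QOp n)
    (hU : U ∈ Matrix.unitaryGroup (Fin n → Fin 2) ℂ)
    (hV : V ∈ Matrix.unitaryGroup (Fin n → Fin 2) ℂ) :
    Set.ncard (PsubU Uᴴ ∩ PsubU V) ≤ sU (U * V) :=
  inter_le_sU_mul_general U V
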